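/- Let Γ be a countable discrete abelian group, X and Y finite-dimensional complex Hilbert spaces, ρ : Γ → U(X) a unitary representation, h ∈ AP(Γ, X), and let C : ℓ∞(Γ, X) → ℓ∞(Γ, Y) be a bounded linear operator which is an intertwiner for the representations π_{X,ρ} and π_Y, i.e. C ∘ π_{X,ρ}(γ) = π_Y(γ) ∘ C for all γ ∈ Γ. Then C(T_ρ h) = 0 if and only if C(T_ρ(χ⊗ĥ(χ))) = 0 for every χ ∈ Γ̂. -/

import Mathlib

/-!
Write `ψ = C (T_ρ h)`. The `χ`-weighted averages over the Bohr–Bochner sets of the twisted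
translates `π_{X,ρ}(γ) (T_ρ h)` converge in `ℓ∞` to `T_ρ (χ ⊗ ĥ(χ))`, because the mean of an almost
periodic function is attained uniformly along its translates (for trigonometric polynomials only
the trivial characters survive the averaging). As `C` intertwines, the `χ`-weighted averages of
the translates of `ψ` converge uniformly to `C (T_ρ (χ ⊗ ĥ(χ)))`; this gives the forward
implication.

Conversely, if all modes are killed, these averages of `ψ` tend to `0` for every `χ`. Since
`C (T_ρ (χ ⊗ a))` has the form `χ ⊗ w`, `ψ` is almost periodic, and pairing `ψ` with a
trigonometric approximation shows that the averages of `‖ψ (t - ·)‖²` tend to `0` uniformly in `t`.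
But if `ψ t₀ ≠ 0`, almost periodicity gives finitely many translates of `ψ`, one of which has norm
at least `‖ψ t₀‖ / 2` at each point, so these averages cannot all be small.
-/
open Filter BoundedContinuousFunction

/-- A character of the discrete abelian group `Γ`. -/
def IsChar {Γ : Type*} [AddCommGroup Γ] (χ : Γ → ℂ) : Prop :=
  (∀ γ γ' : Γ, χ (γ + γ') = χ γ * χ γ') ∧ ∀ γ : Γ, ‖χ γ‖ = 1

/-- An `X`-valued trigonometric polynomial on `Γ`. -/
def IsTrigPoly {Γ X : Type*} [AddCommGroup Γ] [NormedAddCommGroup X] [Module ℂ X]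
    (p : Γ → X) : Prop :=
  ∃ (n : ℕ) (χ : Fin n → Γ → ℂ) (a : Fin n → X),
    (∀ k, IsChar (χ k)) ∧ ∀ γ, p γ = ∑ k, χ k γ • a k

/-- An almost periodic `X`-valued function on `Γ`. -/
def IsAP {Γ X : Type*} [AddCommGroup Γ] [NormedAddCommGroup X] [Module ℂ X]
    (h : Γ → X) : Prop :=
  ∀ ε : ℝ, 0 < ε → ∃ p : Γ → X, IsTrigPoly p ∧ ∀ γ, ‖h γ - p γ‖ < ε

/-- A Bohr–Bochner sequence for `Γ`. -/
def IsBohrBochner {Γ : Type*} [AddCommGroup Γ] [DecidableEq Γ] (H : ℕ → Finset Γ) : Prop :=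
  Monotone H ∧ (∀ γ : Γ, ∃ n, γ ∈ H n) ∧
    ∀ γ : Γ, Tendsto
      (fun n => (((H n).filter fun x => γ + x ∉ H n).card : ℝ) / ((H n).card : ℝ))
      atTop (nhds 0)

open Finset

lemma tendstoUniformly_of_norm_sub_le {ι β V : Type*} [NormedAddCommGroup V] {l : Filter ι}
    {F : ι → β → V} {f : β → V} {u : ι → ℝ} (hFu : ∀ n x, ‖f x - F n x‖ ≤ u n)
    (hu : Tendsto u l (nhds 0)) : TendstoUniformly F f l :=
  Metric.tendstoUniformly_iff.2 fun _ hε => (hu.eventually (gt_mem_nhds hε)).mono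
    fun n hn x => (dist_eq_norm _ _).trans_lt ((hFu n x).trans_lt hn)

namespace IsChar

variable {Γ : Type*} [AddCommGroup Γ] {χ χ' : Γ → ℂ}

lemma ne_zero (hχ : IsChar χ) (γ : Γ) : χ γ ≠ 0 :=
  norm_ne_zero_iff.1 (by rw [hχ.2 γ]; exact one_ne_zero)

lemma norm_conj (hχ : IsChar χ) (γ : Γ) : ‖starRingEnd ℂ (χ γ)‖ = 1 := by
  rw [RCLike.norm_conj, hχ.2 γ]

lemma mul_conj (hχ : IsChar χ) (γ : Γ) : χ γ * starRingEnd ℂ (χ γ) = 1 := by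
  rw [Complex.mul_conj, Complex.normSq_eq_norm_sq, hχ.2 γ]; norm_num

lemma map_zero (hχ : IsChar χ) : χ 0 = 1 :=
  (mul_eq_left₀ (hχ.ne_zero 0)).1 (by rw [← hχ.1, add_zero])

lemma map_neg (hχ : IsChar χ) (γ : Γ) : χ (-γ) = starRingEnd ℂ (χ γ) :=
  mul_left_cancel₀ (hχ.ne_zero γ) (by rw [← hχ.1, add_neg_cancel, hχ.map_zero, hχ.mul_conj])

lemma map_sub (hχ : IsChar χ) (t γ : Γ) : χ (t - γ) = χ t * starRingEnd ℂ (χ γ) := by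
  rw [sub_eq_add_neg, hχ.1, hχ.map_neg]

lemma mul_conj_apply_sub (hχ : IsChar χ) (t γ : Γ) :
    χ t * starRingEnd ℂ (χ (t - γ)) = χ γ := by
  rw [hχ.map_sub, map_mul, Complex.conj_conj, ← mul_assoc, hχ.mul_conj, one_mul]

lemma conj (hχ : IsChar χ) : IsChar fun γ => starRingEnd ℂ (χ γ) :=
  ⟨fun γ γ' => by simp only [hχ.1, map_mul], hχ.norm_conj⟩

lemma mul (hχ : IsChar χ) (hχ' : IsChar χ') : IsChar fun γ => χ γ * χ' γ :=
  ⟨fun γ γ' => by simp only [hχ.1, hχ'.1]; ring, fun γ => by rw [norm_mul, hχ.2, hχ'.2, one_mul]⟩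

end IsChar

section Average

variable {α : Type*} {V : Type*} [NormedAddCommGroup V] [NormedSpace ℂ V]

noncomputable def avg (W : Finset α) (F : α → V) : V :=
  ((W.card : ℂ))⁻¹ • ∑ γ ∈ W, F γ

lemma card_smul_avg (W : Finset α) (F : α → V) : (W.card : ℂ) • avg W F = ∑ γ ∈ W, F γ := by
  rcases W.eq_empty_or_nonempty with rfl | hW
  · simp
  · rw [avg, smul_smul, mul_inv_cancel₀ (by exact_mod_cast hW.card_ne_zero), one_smul]

lemma norm_avg_le (W : Finset α) (F : α → V) {M : ℝ} (hM : 0 ≤ M)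
    (hF : ∀ γ ∈ W, ‖F γ‖ ≤ M) : ‖avg W F‖ ≤ M := by
  rcases W.eq_empty_or_nonempty with rfl | hW
  · simpa [avg] using hM
  have hcard : (0 : ℝ) < W.card := by exact_mod_cast hW.card_pos
  rw [avg, norm_smul, norm_inv, Complex.norm_natCast, inv_mul_le_iff₀ hcard]
  calc ‖∑ γ ∈ W, F γ‖ ≤ ∑ γ ∈ W, ‖F γ‖ := norm_sum_le _ _
    _ ≤ W.card * M := by simpa using sum_le_sum hF

lemma avg_sub (W : Finset α) (F G : α → V) :
    avg W (fun γ => F γ - G γ) = avg W F - avg W G := by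
  rw [avg, sum_sub_distrib, smul_sub, avg, avg]

lemma norm_avg_sub_avg_le (W : Finset α) {F G : α → V} {δ : ℝ} (hδ : 0 ≤ δ)
    (hFG : ∀ γ, ‖F γ - G γ‖ ≤ δ) : ‖avg W F - avg W G‖ ≤ δ := by
  rw [← avg_sub]
  exact norm_avg_le W _ hδ fun γ _ => hFG γ

lemma avg_sum (W : Finset α) {ι : Type*} (s : Finset ι) (F : ι → α → V) :
    avg W (fun γ => ∑ k ∈ s, F k γ) = ∑ k ∈ s, avg W (F k) := by
  rw [avg, sum_comm, smul_sum]; rfl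

lemma avg_smul_const (W : Finset α) (f : α → ℂ) (v : V) :
    avg W (fun γ => f γ • v) = avg W f • v := by
  rw [avg, avg, ← sum_smul, smul_assoc]

lemma avg_const_smul (W : Finset α) (c : ℂ) (F : α → V) :
    avg W (fun γ => c • F γ) = c • avg W F := by
  rw [avg, avg, ← smul_sum, smul_comm]

lemma avg_const {W : Finset α} (hW : W.Nonempty) (v : V) : avg W (fun _ => v) = v := by
  rw [avg, sum_const, ← Nat.cast_smul_eq_nsmul ℂ, smul_smul,
    inv_mul_cancel₀ (by exact_mod_cast hW.card_ne_zero), one_smul]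

lemma map_avg {V' : Type*} [NormedAddCommGroup V'] [NormedSpace ℂ V'] {𝓛 : Type*}
    [FunLike 𝓛 V V'] [LinearMapClass 𝓛 ℂ V V'] (L : 𝓛) (W : Finset α) (F : α → V) :
    L (avg W F) = avg W (fun γ => L (F γ)) := by
  rw [avg, avg, map_smul, map_sum]

end Average

section BohrBochner

variable {Γ : Type*} [AddCommGroup Γ] {χ : Γ → ℂ}

lemma IsChar.norm_apply_mul_sum_sub_sum_le [DecidableEq Γ] (hχ : IsChar χ) (W : Finset Γ)
    (γ₀ : Γ) : ‖χ γ₀ * ∑ γ ∈ W, χ γ - ∑ γ ∈ W, χ γ‖ ≤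
      2 * ((W.filter fun x => γ₀ + x ∉ W).card : ℝ) := by
  set A := W.image (γ₀ + ·)
  have hinj : Function.Injective (γ₀ + ·) := add_right_injective γ₀
  have hA : χ γ₀ * ∑ γ ∈ W, χ γ = ∑ γ ∈ A, χ γ := by
    rw [mul_sum, sum_image fun x _ y _ h => hinj h]
    exact sum_congr rfl fun x _ => (hχ.1 γ₀ x).symm
  have hAW : A \ W = (W.filter fun x => γ₀ + x ∉ W).image (γ₀ + ·) := by
    ext; simp [A]
  have hcard : (W \ A).card = (A \ W).card :=
    card_sdiff_comm (card_image_of_injective W hinj).symm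
  have hnorm (S : Finset Γ) : ‖∑ x ∈ S, χ x‖ ≤ S.card := by
    simpa [hχ.2] using norm_sum_le S χ
  rw [hA, ← sum_sdiff_sub_sum_sdiff, two_mul]
  calc ‖∑ x ∈ A \ W, χ x - ∑ x ∈ W \ A, χ x‖
      ≤ ‖∑ x ∈ A \ W, χ x‖ + ‖∑ x ∈ W \ A, χ x‖ := norm_sub_le _ _
    _ ≤ (A \ W).card + (W \ A).card := add_le_add (hnorm _) (hnorm _)
    _ = _ := by rw [hcard, hAW, card_image_of_injective _ hinj]

variable [DecidableEq Γ] {H : ℕ → Finset Γ}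

lemma IsBohrBochner.eventually_nonempty (hH : IsBohrBochner H) :
    ∀ᶠ n in atTop, (H n).Nonempty := by
  obtain ⟨n₀, hn₀⟩ := hH.2.1 0
  exact eventually_atTop.2 ⟨n₀, fun n hn => ⟨0, hH.1 hn hn₀⟩⟩

lemma IsBohrBochner.tendsto_avg_char_of_ne_one (hH : IsBohrBochner H) (hχ : IsChar χ)
    {γ₀ : Γ} (hγ₀ : χ γ₀ ≠ 1) : Tendsto (fun n => avg (H n) χ) atTop (nhds 0) := by
  have hc : 0 < ‖χ γ₀ - 1‖ := norm_pos_iff.2 (sub_ne_zero.2 hγ₀)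
  have hbound (n : ℕ) : ‖avg (H n) χ‖ ≤ 2 / ‖χ γ₀ - 1‖ *
      ((((H n).filter fun x => γ₀ + x ∉ H n).card : ℝ) / (H n).card) := by
    have key := hχ.norm_apply_mul_sum_sub_sum_le (H n) γ₀
    rw [← sub_one_mul, norm_mul] at key
    rw [avg, norm_smul, norm_inv, Complex.norm_natCast]
    calc _ = (‖χ γ₀ - 1‖⁻¹ * ((H n).card : ℝ)⁻¹) * (‖χ γ₀ - 1‖ * ‖∑ γ ∈ H n, χ γ‖) := by
          field_simp
      _ ≤ (‖χ γ₀ - 1‖⁻¹ * ((H n).card : ℝ)⁻¹) *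
          (2 * ((H n).filter fun x => γ₀ + x ∉ H n).card) := by gcongr
      _ = _ := by ring
  refine squeeze_zero_norm hbound ?_
  simpa using (hH.2.2 γ₀).const_mul (2 / ‖χ γ₀ - 1‖)

end BohrBochner

section Mean

variable {Γ : Type*} {χ : Γ → ℂ}

open scoped Classical in
noncomputable def charMean (χ : Γ → ℂ) : ℂ := if ∀ γ, χ γ = 1 then 1 else 0

lemma charMean_conj (χ : Γ → ℂ) : charMean (fun γ => starRingEnd ℂ (χ γ)) = charMean χ := by
  have h : (∀ γ, starRingEnd ℂ (χ γ) = 1) ↔ ∀ γ, χ γ = 1 :=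
    forall_congr' fun γ => map_eq_one_iff _ (RingHom.injective _)
  unfold charMean
  congr 1
  exact propext h

lemma apply_mul_charMean (χ : Γ → ℂ) (t : Γ) : χ t * charMean χ = charMean χ := by
  unfold charMean
  split_ifs with h
  · rw [h t, one_mul]
  · rw [mul_zero]

variable [AddCommGroup Γ]

lemma IsChar.avg_translate (hχ : IsChar χ) (W : Finset Γ) (t : Γ) :
    avg W (fun γ => χ (t - γ)) = χ t * avg W (fun γ => starRingEnd ℂ (χ γ)) := by
  simp only [hχ.map_sub, ← smul_eq_mul (χ t), avg_const_smul]

lemma IsChar.norm_charMean_sub_avg_translate (hχ : IsChar χ) (W : Finset Γ) (t : Γ) :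
    ‖charMean χ - avg W (fun γ => χ (t - γ))‖ =
      ‖avg W (fun γ => starRingEnd ℂ (χ γ)) - charMean χ‖ := by
  rw [hχ.avg_translate, ← apply_mul_charMean χ t, ← mul_sub, norm_mul, hχ.2, one_mul,
    norm_sub_rev, apply_mul_charMean]

variable [DecidableEq Γ] {H : ℕ → Finset Γ}

lemma IsBohrBochner.tendsto_avg_char (hH : IsBohrBochner H) (hχ : IsChar χ) :
    Tendsto (fun n => avg (H n) χ) atTop (nhds (charMean χ)) := by
  by_cases htriv : ∀ γ, χ γ = 1
  · rw [charMean, if_pos htriv, funext htriv]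
    exact tendsto_const_nhds.congr' (hH.eventually_nonempty.mono fun n hn => (avg_const hn 1).symm)
  · obtain ⟨γ₀, hγ₀⟩ := not_forall.1 htriv
    rw [charMean, if_neg fun h => hγ₀ (h γ₀)]
    exact hH.tendsto_avg_char_of_ne_one hχ hγ₀

lemma IsTrigPoly.exists_tendstoUniformly_avg {V : Type*} [NormedAddCommGroup V]
    [NormedSpace ℂ V] {P : Γ → V} (hP : IsTrigPoly P) (hH : IsBohrBochner H) :
    ∃ M : V, TendstoUniformly (fun n t => avg (H n) (fun γ => P (t - γ))) (fun _ => M) atTop ∧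
      Tendsto (fun n => avg (H n) P) atTop (nhds M) := by
  obtain ⟨m, χ, a, hχ, hPeq⟩ := hP
  refine ⟨∑ k, charMean (χ k) • a k, ?_, ?_⟩
  · refine tendstoUniformly_of_norm_sub_le (u := fun n =>
      ∑ k, ‖avg (H n) (fun γ => starRingEnd ℂ (χ k γ)) - charMean (χ k)‖ * ‖a k‖)
      (fun n t => ?_) ?_
    · simp only [hPeq, avg_sum, avg_smul_const, ← sum_sub_distrib, ← sub_smul]
      refine (norm_sum_le _ _).trans (sum_le_sum fun k _ => ?_)
      rw [norm_smul, (hχ k).norm_charMean_sub_avg_translate]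
    · simpa using tendsto_finsetSum _ fun k _ => (tendsto_iff_norm_sub_tendsto_zero.1
        (charMean_conj (χ k) ▸ hH.tendsto_avg_char (hχ k).conj)).mul_const ‖a k‖
  · simp only [funext hPeq, avg_sum, avg_smul_const]
    exact tendsto_finsetSum _ fun k _ => (hH.tendsto_avg_char (hχ k)).smul_const (a k)

end Mean

section AlmostPeriodic

variable {Γ : Type*} [AddCommGroup Γ] {V : Type*} [NormedAddCommGroup V] [NormedSpace ℂ V]
  {h : Γ → V}

lemma IsAP.char_smul (hh : IsAP h) {χ : Γ → ℂ} (hχ : IsChar χ) : IsAP fun γ => χ γ • h γ := by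
  intro ε hε
  obtain ⟨P, ⟨m, χk, a, hχk, hP⟩, hhP⟩ := hh ε hε
  refine ⟨fun γ => χ γ • P γ,
    ⟨m, fun k γ => χ γ * χk k γ, a, fun k => hχ.mul (hχk k), fun γ => ?_⟩, fun γ => ?_⟩
  · simp only [hP, smul_sum, smul_smul]
  · rw [← smul_sub, norm_smul, hχ.2, one_mul]
    exact hhP γ

variable [DecidableEq Γ] {H : ℕ → Finset Γ}

lemma IsAP.exists_tendsto_avg [CompleteSpace V] (hh : IsAP h) (hH : IsBohrBochner H) :
    ∃ b, Tendsto (fun n => avg (H n) h) atTop (nhds b) := by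
  refine cauchySeq_tendsto_of_complete (Metric.cauchySeq_iff'.2 fun ε hε => ?_)
  obtain ⟨P, hP, hhP⟩ := hh (ε / 4) (by positivity)
  obtain ⟨M, -, hPM⟩ := hP.exists_tendstoUniformly_avg hH
  obtain ⟨N, hN⟩ := Metric.cauchySeq_iff'.1 hPM.cauchySeq (ε / 2) (by positivity)
  have hclose (k : ℕ) : dist (avg (H k) h) (avg (H k) P) ≤ ε / 4 := by
    rw [dist_eq_norm]
    exact norm_avg_sub_avg_le _ (by positivity) fun γ => (hhP γ).le
  refine ⟨N, fun n hn => ?_⟩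
  linarith [dist_triangle4 (avg (H n) h) (avg (H n) P) (avg (H N) P) (avg (H N) h), hclose n,
    hclose N, hN n hn, dist_comm (avg (H N) P) (avg (H N) h)]

lemma IsAP.tendstoUniformly_avg_translate (hh : IsAP h) (hH : IsBohrBochner H) {b : V}
    (hb : Tendsto (fun n => avg (H n) h) atTop (nhds b)) :
    TendstoUniformly (fun n t => avg (H n) (fun γ => h (t - γ))) (fun _ => b) atTop := by
  refine Metric.tendstoUniformly_iff.2 fun ε hε => ?_
  obtain ⟨P, hP, hhP⟩ := hh (ε / 5) (by positivity)
  obtain ⟨M, hPu, hPM⟩ := hP.exists_tendstoUniformly_avg hH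
  have hclose (k : ℕ) (s : Γ → Γ) :
      dist (avg (H k) (fun γ => h (s γ))) (avg (H k) (fun γ => P (s γ))) ≤ ε / 5 := by
    rw [dist_eq_norm]
    exact norm_avg_sub_avg_le _ (by positivity) fun γ => (hhP (s γ)).le
  filter_upwards [Metric.tendstoUniformly_iff.1 hPu (ε / 5) (by positivity),
    hPM.eventually (Metric.ball_mem_nhds M (by positivity : 0 < ε / 5)),
    hb.eventually (Metric.ball_mem_nhds b (by positivity : 0 < ε / 5))] with n hPu hPM hb t
  have hclose₀ : dist (avg (H n) h) (avg (H n) P) ≤ ε / 5 := hclose n id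
  linarith [dist_triangle4 b (avg (H n) h) (avg (H n) P) M,
    dist_triangle4 b M (avg (H n) fun γ => P (t - γ)) (avg (H n) fun γ => h (t - γ)),
    hclose n (t - ·), hPu t, dist_comm b (avg (H n) h),
    dist_comm (avg (H n) fun γ => P (t - γ)) (avg (H n) fun γ => h (t - γ))]

end AlmostPeriodic

lemma BoundedContinuousFunction.avg_apply {α β : Type*} [TopologicalSpace β] {V : Type*}
    [NormedAddCommGroup V] [NormedSpace ℂ V] (W : Finset α) (F : α → β →ᵇ V) (t : β) :
    avg W F t = avg W (fun γ => F γ t) :=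
  map_avg (evalCLM ℂ t) W F

section Intertwiner

variable {Γ : Type*} [AddCommGroup Γ] [TopologicalSpace Γ] [DiscreteTopology Γ]
  {X : Type*} [NormedAddCommGroup X] [NormedSpace ℂ X]
  {Y : Type*} [NormedAddCommGroup Y] [NormedSpace ℂ Y]
  (ρ : Γ → X ≃ₗᵢ[ℂ] X)

/-- The twisted translation `π_{X,ρ}(γ) = T_ρ ∘ π_X(γ) ∘ T_ρ⁻¹`. -/
noncomputable def twistedTranslate (γ : Γ) (f : Γ →ᵇ X) : Γ →ᵇ X :=
  ofNormedAddCommGroupDiscrete (fun t => ρ t ((ρ (t - γ)).symm (f (t - γ)))) ‖f‖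
    fun t => by simpa using f.norm_coe_le_norm (t - γ)

def IsTwistedIntertwiner (C : (Γ →ᵇ X) →L[ℂ] (Γ →ᵇ Y)) : Prop :=
  ∀ γ f t, C (twistedTranslate ρ γ f) t = C f (t - γ)

variable {ρ} {C : (Γ →ᵇ X) →L[ℂ] (Γ →ᵇ Y)} {χ : Γ → ℂ}

lemma exists_twist_char (ρ : Γ → X ≃ₗᵢ[ℂ] X) (hχ : IsChar χ) (b : X) :
    ∃ g : Γ →ᵇ X, ∀ t, g t = ρ t (χ t • b) :=
  ⟨ofNormedAddCommGroupDiscrete (fun t => ρ t (χ t • b)) ‖b‖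
    fun t => by rw [LinearIsometryEquiv.norm_map, norm_smul, hχ.2, one_mul], fun _ => rfl⟩

lemma IsTwistedIntertwiner.apply_twist_char (hC : IsTwistedIntertwiner ρ C) (hχ : IsChar χ)
    {b : X} {g : Γ →ᵇ X} (hg : ∀ t, g t = ρ t (χ t • b)) (t : Γ) : C g t = χ t • C g 0 := by
  have htranslate : twistedTranslate ρ t g = starRingEnd ℂ (χ t) • g := by
    ext s
    rw [twistedTranslate, coe_ofNormedAddCommGroupDiscrete, BoundedContinuousFunction.smul_apply, hg, hg,
      LinearIsometryEquiv.symm_apply_apply, hχ.map_sub, ← map_smul, smul_smul, mul_comm]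
  have h := hC t g t
  rw [htranslate, map_smul, sub_self, BoundedContinuousFunction.smul_apply] at h
  rw [← h, smul_smul, hχ.mul_conj, one_smul]

lemma IsTwistedIntertwiner.isAP (hC : IsTwistedIntertwiner ρ C) {h : Γ → X} (hh : IsAP h)
    {f : Γ →ᵇ X} (hf : ∀ t, f t = ρ t (h t)) : IsAP (C f) := by
  intro ε hε
  have hδ : 0 < ε / (‖C‖ + 1) := by positivity
  obtain ⟨P, ⟨m, χ, a, hχ, hP⟩, hhP⟩ := hh _ hδ
  choose g hg using fun k => exists_twist_char ρ (hχ k) (a k)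
  refine ⟨fun t => ∑ k, χ k t • C (g k) 0, ⟨m, χ, fun k => C (g k) 0, hχ, fun _ => rfl⟩,
    fun t => ?_⟩
  have hfg : ‖f - ∑ k, g k‖ ≤ ε / (‖C‖ + 1) := by
    refine (norm_le hδ.le).2 fun s => ?_
    have hfs : (f - ∑ k, g k) s = ρ s (h s - P s) := by
      simp [hf, hg, hP, map_sum]
    rw [hfs, LinearIsometryEquiv.norm_map]
    exact (hhP s).le
  have hCg : ∑ k, χ k t • C (g k) 0 = C (∑ k, g k) t := by
    simp [(hC.apply_twist_char (hχ _) (hg _) t).symm]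
  calc ‖C f t - ∑ k, χ k t • C (g k) 0‖ = ‖C (f - ∑ k, g k) t‖ := by
        rw [hCg, map_sub, BoundedContinuousFunction.sub_apply]
    _ ≤ ‖C‖ * ‖f - ∑ k, g k‖ := (norm_coe_le_norm _ _).trans (C.le_opNorm _)
    _ ≤ ‖C‖ * (ε / (‖C‖ + 1)) := by gcongr
    _ < (‖C‖ + 1) * (ε / (‖C‖ + 1)) := by gcongr; linarith
    _ = ε := by field_simp

lemma IsTwistedIntertwiner.tendstoUniformly_avg_translate [DecidableEq Γ] {H : ℕ → Finset Γ}
    (hC : IsTwistedIntertwiner ρ C) (hH : IsBohrBochner H) {h : Γ → X} (hh : IsAP h)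
    {f : Γ →ᵇ X} (hf : ∀ t, f t = ρ t (h t)) (hχ : IsChar χ) {b : X}
    (hb : Tendsto (fun n => avg (H n) (fun γ => starRingEnd ℂ (χ γ) • h γ)) atTop (nhds b))
    {g : Γ →ᵇ X} (hg : ∀ t, g t = ρ t (χ t • b)) :
    TendstoUniformly (fun n t => avg (H n) (fun γ => χ γ • C f (t - γ))) (C g) atTop := by
  set G : ℕ → Γ →ᵇ X := fun n => avg (H n) (fun γ => χ γ • twistedTranslate ρ γ f)
  have hCG (n : ℕ) (t : Γ) : C (G n) t = avg (H n) (fun γ => χ γ • C f (t - γ)) := by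
    have hCt (γ : Γ) := hC γ f t
    simp only [G, map_avg, map_smul, avg_apply, BoundedContinuousFunction.smul_apply, hCt]
  have hGg : Tendsto G atTop (nhds g) := by
    have hG (n : ℕ) (t : Γ) : G n t =
        ρ t (χ t • avg (H n) (fun γ => starRingEnd ℂ (χ (t - γ)) • h (t - γ))) := by
      simp only [G, avg_apply, BoundedContinuousFunction.smul_apply, twistedTranslate,
        coe_ofNormedAddCommGroupDiscrete, hf, LinearIsometryEquiv.symm_apply_apply,
        ← avg_const_smul, map_avg, smul_smul, hχ.mul_conj_apply_sub, map_smul]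
    have hU := ((hh.char_smul hχ.conj).tendstoUniformly_avg_translate hH hb)
    rw [tendsto_iff_tendstoUniformly, Metric.tendstoUniformly_iff]
    intro ε hε
    filter_upwards [Metric.tendstoUniformly_iff.1 hU ε hε] with n hn t
    rw [hG, hg, dist_eq_norm, ← map_sub, LinearIsometryEquiv.norm_map, ← smul_sub, norm_smul,
      hχ.2, one_mul, ← dist_eq_norm]
    exact hn t
  have hCGg := tendsto_iff_tendstoUniformly.1 ((C.continuous.tendsto g).comp hGg)
  convert hCGg using 1
  exact funext fun n => funext fun t => (hCG n t).symm

end Intertwiner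

section Uniqueness

variable {Γ : Type*} [AddCommGroup Γ] {V : Type*} [NormedAddCommGroup V] [NormedSpace ℂ V]

lemma IsTrigPoly.exists_finset_translate_net {P : Γ → V} (hP : IsTrigPoly P) {δ : ℝ}
    (hδ : 0 < δ) : ∃ S : Finset Γ, ∀ τ, ∃ σ ∈ S, ∀ t, ‖P (t - τ) - P (t - σ)‖ < δ := by
  obtain ⟨m, χ, a, hχ, hPeq⟩ := hP
  set A := ∑ k, ‖a k‖ + 1
  have hA : 0 < A := by positivity
  set coef : Γ → Fin m → ℂ := fun τ k => starRingEnd ℂ (χ k τ)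
  have hbdd : Set.range coef ⊆ Metric.closedBall 0 1 := by
    rintro _ ⟨τ, rfl⟩
    exact mem_closedBall_zero_iff.2 ((pi_norm_le_iff_of_nonneg zero_le_one).2 fun k =>
      ((hχ k).norm_conj τ).le)
  obtain ⟨T, hTsub, hTfin, hTcover⟩ := Metric.finite_approx_of_totallyBounded
    ((isCompact_closedBall _ _).totallyBounded.subset hbdd) (δ / A) (by positivity)
  rw [← Set.image_univ] at hTsub
  obtain ⟨S, -, hSfin, rfl⟩ := hTfin.exists_subset_finite_image_eq hTsub
  refine ⟨hSfin.toFinset, fun τ => ?_⟩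
  obtain ⟨_, ⟨σ, hσ, rfl⟩, hτσ⟩ := Set.mem_iUnion₂.1 (hTcover (Set.mem_range_self τ))
  refine ⟨σ, hSfin.mem_toFinset.2 hσ, fun t => ?_⟩
  have hdiff : P (t - τ) - P (t - σ) = ∑ k, (χ k t * (coef τ k - coef σ k)) • a k := by
    simp only [hPeq, ← sum_sub_distrib, ← sub_smul, (hχ _).map_sub, coef, mul_sub]
  calc ‖P (t - τ) - P (t - σ)‖ ≤ ∑ k, dist (coef τ) (coef σ) * ‖a k‖ := by
        rw [hdiff]
        refine (norm_sum_le _ _).trans (sum_le_sum fun k _ => ?_)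
        rw [norm_smul, norm_mul, (hχ k).2, one_mul, dist_eq_norm]
        gcongr
        exact norm_le_pi_norm (coef τ - coef σ) k
    _ ≤ dist (coef τ) (coef σ) * A := by
        rw [← mul_sum]
        gcongr
        linarith
    _ < δ / A * A := by gcongr; exact Metric.mem_ball.1 hτσ
    _ = δ := div_mul_cancel₀ δ hA.ne'

lemma IsAP.exists_finset_translate_net {h : Γ → V} (hh : IsAP h) {δ : ℝ} (hδ : 0 < δ) :
    ∃ S : Finset Γ, ∀ τ, ∃ σ ∈ S, ∀ t, ‖h (t - τ) - h (t - σ)‖ < δ := by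
  obtain ⟨P, hP, hhP⟩ := hh (δ / 3) (by positivity)
  obtain ⟨S, hS⟩ := hP.exists_finset_translate_net (by positivity : 0 < δ / 3)
  refine ⟨S, fun τ => ?_⟩
  obtain ⟨σ, hσ, hτσ⟩ := hS τ
  refine ⟨σ, hσ, fun t => ?_⟩
  have htri := dist_triangle4 (h (t - τ)) (P (t - τ)) (P (t - σ)) (h (t - σ))
  simp only [dist_eq_norm] at htri
  linarith [hhP (t - τ), hτσ t, norm_sub_rev (P (t - σ)) (h (t - σ)), hhP (t - σ)]

lemma IsAP.eq_zero_of_eventually_sum_norm_sq_le [DecidableEq Γ] {H : ℕ → Finset Γ}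
    (hH : IsBohrBochner H) {ψ : Γ → V} (hψ : IsAP ψ)
    (hsmall : ∀ ε > 0, ∀ᶠ n in atTop, ∀ t, ∑ γ ∈ H n, ‖ψ (t - γ)‖ ^ 2 ≤ (H n).card * ε) :
    ψ = 0 := by
  by_contra hne
  obtain ⟨t₀, ht₀⟩ := Function.ne_iff.1 hne
  have hc : 0 < ‖ψ t₀‖ := norm_pos_iff.2 ht₀
  obtain ⟨S, hS⟩ := hψ.exists_finset_translate_net (half_pos hc)
  have hlarge (γ : Γ) : ∃ σ ∈ S, ‖ψ t₀‖ / 2 ≤ ‖ψ (t₀ - σ - γ)‖ := by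
    obtain ⟨σ, hσ, hnear⟩ := hS (-γ)
    refine ⟨σ, hσ, ?_⟩
    have := hnear (t₀ - γ)
    rw [sub_neg_eq_add, sub_add_cancel, sub_right_comm] at this
    linarith [norm_sub_norm_le (ψ t₀) (ψ (t₀ - σ - γ))]
  have hSne : 0 < (S.card : ℝ) := by
    obtain ⟨σ, hσ, -⟩ := hlarge 0
    exact_mod_cast card_pos.2 ⟨σ, hσ⟩
  obtain ⟨n, hn, hsum⟩ := (hH.eventually_nonempty.and
    (hsmall (‖ψ t₀‖ ^ 2 / (8 * S.card)) (by positivity))).exists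
  have hW : 0 < ((H n).card : ℝ) := by exact_mod_cast hn.card_pos
  have hlower : ((H n).card : ℝ) * (‖ψ t₀‖ / 2) ^ 2 ≤
      ∑ σ ∈ S, ∑ γ ∈ H n, ‖ψ (t₀ - σ - γ)‖ ^ 2 := by
    rw [sum_comm, ← nsmul_eq_mul, ← sum_const]
    refine sum_le_sum fun γ _ => ?_
    obtain ⟨σ, hσ, hγσ⟩ := hlarge γ
    exact (pow_le_pow_left₀ (by positivity) hγσ 2).trans
      (single_le_sum (f := fun σ => ‖ψ (t₀ - σ - γ)‖ ^ 2) (fun _ _ => by positivity) hσ)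
  have hupper : ∑ σ ∈ S, ∑ γ ∈ H n, ‖ψ (t₀ - σ - γ)‖ ^ 2 ≤
      S.card * ((H n).card * (‖ψ t₀‖ ^ 2 / (8 * S.card))) := by
    rw [← nsmul_eq_mul, ← sum_const]
    exact sum_le_sum fun σ _ => hsum (t₀ - σ)
  have hsimp : (S.card : ℝ) * ((H n).card * (‖ψ t₀‖ ^ 2 / (8 * S.card))) =
      (H n).card * ‖ψ t₀‖ ^ 2 / 8 := by
    field_simp
  have hcontra := hlower.trans (hupper.trans_eq hsimp)
  rw [div_pow] at hcontra
  linarith [mul_pos hW (pow_pos hc 2)]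

end Uniqueness

section InnerProduct

open scoped InnerProductSpace

variable {Y : Type*} [NormedAddCommGroup Y] [InnerProductSpace ℂ Y]

lemma norm_sq_le_norm_sub_mul_norm_add_re_inner (y q : Y) :
    ‖y‖ ^ 2 ≤ ‖y - q‖ * ‖y‖ + RCLike.re ⟪q, y⟫_ℂ := by
  have hsplit : ⟪y, y⟫_ℂ = ⟪y - q, y⟫_ℂ + ⟪q, y⟫_ℂ := by rw [← inner_add_left, sub_add_cancel]
  rw [← inner_self_eq_norm_sq (𝕜 := ℂ), hsplit, map_add]
  gcongr
  exact (RCLike.re_le_norm _).trans (norm_inner_le_norm _ _)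

lemma IsChar.inner_smul_apply_sub {Γ : Type*} [AddCommGroup Γ] {χ : Γ → ℂ} (hχ : IsChar χ)
    (t γ : Γ) (w y : Y) : ⟪χ (t - γ) • w, y⟫_ℂ = ⟪χ t • w, χ γ • y⟫_ℂ := by
  rw [inner_smul_left, inner_smul_left, inner_smul_right, hχ.map_sub, map_mul,
    Complex.conj_conj, mul_assoc]

lemma norm_sum_inner_trigPoly_translate_le {Γ : Type*} [AddCommGroup Γ] {m : ℕ}
    {χ : Fin m → Γ → ℂ} (hχ : ∀ k, IsChar (χ k)) (w : Fin m → Y) (W : Finset Γ) (t : Γ)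
    (y : Γ → Y) : ‖∑ γ ∈ W, ⟪∑ k, χ k (t - γ) • w k, y γ⟫_ℂ‖ ≤
      ∑ k, ‖w k‖ * ‖∑ γ ∈ W, χ k γ • y γ‖ := by
  have hswap : ∑ γ ∈ W, ⟪∑ k, χ k (t - γ) • w k, y γ⟫_ℂ =
      ∑ k, ⟪χ k t • w k, ∑ γ ∈ W, χ k γ • y γ⟫_ℂ := by
    simp only [sum_inner, inner_sum, (hχ _).inner_smul_apply_sub]
    exact sum_comm
  rw [hswap]
  refine (norm_sum_le _ _).trans (sum_le_sum fun k _ => (norm_inner_le_norm _ _).trans_eq ?_)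
  rw [norm_smul, (hχ k).2, one_mul]

variable {Γ : Type*} [AddCommGroup Γ] [TopologicalSpace Γ] {H : ℕ → Finset Γ}

lemma IsAP.eventually_sum_norm_sq_translate_le {ψ : Γ →ᵇ Y} (hψ : IsAP ψ)
    (h0 : ∀ χ, IsChar χ →
      TendstoUniformly (fun n t => avg (H n) (fun γ => χ γ • ψ (t - γ))) 0 atTop)
    {ε : ℝ} (hε : 0 < ε) :
    ∀ᶠ n in atTop, ∀ t, ∑ γ ∈ H n, ‖ψ (t - γ)‖ ^ 2 ≤ (H n).card * ε := by
  set M := ‖ψ‖ + 1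
  have hM₀ : 0 < M := by positivity
  obtain ⟨Q, ⟨m, χ, w, hχ, hQ⟩, hψQ⟩ := hψ (ε / (2 * M)) (by positivity)
  set A := ∑ k, ‖w k‖ + 1
  have hA₀ : 0 < A := by positivity
  have hsmall : ∀ᶠ n in atTop, ∀ k t, ‖avg (H n) (fun γ => χ k γ • ψ (t - γ))‖ < ε / (2 * A) :=
    eventually_all.2 fun k => (Metric.tendstoUniformly_iff.1 (h0 _ (hχ k))
      (ε / (2 * A)) (by positivity)).mono fun n hn t => by simpa using hn t
  filter_upwards [hsmall] with n hn t
  have hpoint (s : Γ) : ‖ψ s‖ ^ 2 ≤ ε / 2 + RCLike.re ⟪Q s, ψ s⟫_ℂ := by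
    have hψs : ‖ψ s‖ ≤ M := (norm_coe_le_norm ψ s).trans (by linarith)
    have hM : ε / (2 * M) * M = ε / 2 := by field_simp
    have : ‖ψ s - Q s‖ * ‖ψ s‖ ≤ ε / (2 * M) * M := by gcongr; exact (hψQ s).le
    linarith [norm_sq_le_norm_sub_mul_norm_add_re_inner (ψ s) (Q s)]
  have hcross : RCLike.re (∑ γ ∈ H n, ⟪Q (t - γ), ψ (t - γ)⟫_ℂ) ≤ (H n).card * (ε / 2) := by
    simp only [hQ]
    calc _ ≤ ∑ k, ‖w k‖ * ‖∑ γ ∈ H n, χ k γ • ψ (t - γ)‖ :=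
          (RCLike.re_le_norm _).trans (norm_sum_inner_trigPoly_translate_le hχ w (H n) t _)
      _ ≤ ∑ k, ‖w k‖ * ((H n).card * (ε / (2 * A))) := by
          refine sum_le_sum fun k _ => ?_
          rw [← card_smul_avg, norm_smul, Complex.norm_natCast]
          gcongr
          exact (hn k t).le
      _ ≤ A * ((H n).card * (ε / (2 * A))) := by
          rw [← sum_mul]
          gcongr
          linarith
      _ = (H n).card * (ε / 2) := by field_simp
  calc ∑ γ ∈ H n, ‖ψ (t - γ)‖ ^ 2 ≤ ∑ γ ∈ H n, (ε / 2 + RCLike.re ⟪Q (t - γ), ψ (t - γ)⟫_ℂ) :=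
        sum_le_sum fun γ _ => hpoint (t - γ)
    _ = (H n).card * (ε / 2) + RCLike.re (∑ γ ∈ H n, ⟪Q (t - γ), ψ (t - γ)⟫_ℂ) := by
        rw [sum_add_distrib, sum_const, nsmul_eq_mul, map_sum]
    _ ≤ (H n).card * ε := by linarith

end InnerProduct

theorem twisted_intertwiner_vanishes_iff_vanishes_on_fourier_modes_general
    {Γ : Type*} [AddCommGroup Γ] [DecidableEq Γ]
    [TopologicalSpace Γ] [DiscreteTopology Γ]
    {X : Type*} [NormedAddCommGroup X] [InnerProductSpace ℂ X] [FiniteDimensional ℂ X]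
    {Y : Type*} [NormedAddCommGroup Y] [InnerProductSpace ℂ Y]
    (H : ℕ → Finset Γ) (hH : IsBohrBochner H)
    (ρ : Γ → (X ≃ₗᵢ[ℂ] X))
    (C : (Γ →ᵇ X) →L[ℂ] (Γ →ᵇ Y))
    (hC : ∀ (γ : Γ) (f g : Γ →ᵇ X),
      (∀ γ' : Γ, g γ' = ρ γ' ((ρ (γ' - γ)).symm (f (γ' - γ)))) →
      ∀ γ'' : Γ, C g γ'' = C f (γ'' - γ))
    (h : Γ → X) (hAP : IsAP h)
    (fh : Γ →ᵇ X) (hfh : ∀ γ : Γ, fh γ = ρ γ (h γ)) :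
    C fh = 0 ↔
      ∀ (χ : Γ → ℂ) (b : X) (g : Γ →ᵇ X), IsChar χ →
        Tendsto
          (fun n => (((H n).card : ℂ))⁻¹ • ∑ γ ∈ H n, (starRingEnd ℂ) (χ γ) • h γ)
          atTop (nhds b) →
        (∀ γ : Γ, g γ = ρ γ (χ γ • b)) → C g = 0 := by
  have hC' : IsTwistedIntertwiner ρ C := fun γ f => hC γ f _ fun _ => rfl
  constructor
  · intro hψ χ b g hχ hb hg
    ext t
    refine tendsto_nhds_unique
      ((hC'.tendstoUniformly_avg_translate hH hAP hfh hχ hb hg).tendsto_at t) ?_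
    simp [hψ, avg]
  · intro hmodes
    have hvanish (χ : Γ → ℂ) (hχ : IsChar χ) :
        TendstoUniformly (fun n t => avg (H n) (fun γ => χ γ • C fh (t - γ))) 0 atTop := by
      obtain ⟨b, hb⟩ := (hAP.char_smul hχ.conj).exists_tendsto_avg hH
      obtain ⟨g, hg⟩ := exists_twist_char ρ hχ b
      simpa [hmodes χ b g hχ hb hg] using
        hC'.tendstoUniformly_avg_translate hH hAP hfh hχ hb hg
    have hψ := hC'.isAP hAP hfh
    ext t
    exact congrFun (hψ.eq_zero_of_eventually_sum_norm_sq_le hH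
      fun ε hε => hψ.eventually_sum_norm_sq_translate_le hvanish hε) t

/-- let `ρ : Γ → U(X)` be a unitary representation, `T_ρ` the twist
`(T_ρ f)(γ) = ρ(γ) f(γ)` and `π_{X,ρ}(γ) = T_ρ ∘ π_X(γ) ∘ T_ρ⁻¹`.  If the bounded
linear operator `C : ℓ∞(Γ, X) → ℓ∞(Γ, Y)` intertwines `π_{X,ρ}` and `π_Y`, then for
`h ∈ AP(Γ, X)`, `C (T_ρ h) = 0` iff `C (T_ρ (χ ⊗ ĥ(χ))) = 0` for every character
`χ ∈ Γ̂`.  Here `ℓ∞(Γ, X)` is realised as `Γ →ᵇ X` for the discrete group `Γ`. -/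
theorem twisted_intertwiner_vanishes_iff_vanishes_on_fourier_modes
    {Γ : Type*} [AddCommGroup Γ] [Countable Γ] [DecidableEq Γ]
    [TopologicalSpace Γ] [DiscreteTopology Γ]
    {X : Type*} [NormedAddCommGroup X] [InnerProductSpace ℂ X] [FiniteDimensional ℂ X]
    {Y : Type*} [NormedAddCommGroup Y] [InnerProductSpace ℂ Y] [FiniteDimensional ℂ Y]
    (H : ℕ → Finset Γ) (hH : IsBohrBochner H)
    (ρ : Γ → (X ≃ₗᵢ[ℂ] X))
    (hρ : ∀ γ γ' : Γ, ∀ x : X, ρ (γ + γ') x = ρ γ (ρ γ' x))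
    (C : (Γ →ᵇ X) →L[ℂ] (Γ →ᵇ Y))
    (hC : ∀ (γ : Γ) (f g : Γ →ᵇ X),
      (∀ γ' : Γ, g γ' = ρ γ' ((ρ (γ' - γ)).symm (f (γ' - γ)))) →
      ∀ γ'' : Γ, C g γ'' = C f (γ'' - γ))
    (h : Γ → X) (hAP : IsAP h)
    (fh : Γ →ᵇ X) (hfh : ∀ γ : Γ, fh γ = ρ γ (h γ)) :
    C fh = 0 ↔
      ∀ (χ : Γ → ℂ) (b : X) (g : Γ →ᵇ X), IsChar χ →
        Tendsto
          (fun n => (((H n).card : ℂ))⁻¹ • ∑ γ ∈ H n, (starRingEnd ℂ) (χ γ) • h γ)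
          atTop (nhds b) →
        (∀ γ : Γ, g γ = ρ γ (χ γ • b)) → C g = 0 :=
  twisted_intertwiner_vanishes_iff_vanishes_on_fourier_modes_general H hH ρ C hC h hAP fh hfh
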